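/- arXiv:cs/0211001 — 2 statements merged into one kernel-verified Lean document; each statement's English description precedes it below -/
import Mathlib

section
/- (Surjectivity half of Theorem 1.) For all i ≤ m, j ≤ n, and every LCS s of A_i and B_j, there exists an antidominant backtrace (i_1,j_1), ..., (i_k,j_k) for (i,j) with [a_{i_1}, ..., a_{i_k}] = s. -/
/-- `s` is a common subsequence of `A` and `B`. -/
def IsCommonSubseq {α : Type*} (A B s : List α) : Prop :=
  s.Sublist A ∧ s.Sublist B

/-- `lcsL A B i j` is the maximum length of a common subsequence of the
length-`i` prefix of `A` and the length-`j` prefix of `B`. -/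
noncomputable def lcsL {α : Type*} (A B : List α) (i j : ℕ) : ℕ :=
  sSup {k | ∃ s : List α, IsCommonSubseq (A.take i) (B.take j) s ∧ s.length = k}

/-- `s` is a longest common subsequence of the length-`i` prefix of `A` and
the length-`j` prefix of `B`. -/
def IsLCS {α : Type*} (A B : List α) (i j : ℕ) (s : List α) : Prop :=
  IsCommonSubseq (A.take i) (B.take j) s ∧ s.length = lcsL A B i j

/-- The (1-indexed) pair `(i, j)` is a match: `a_i = b_j`. -/
def IsMatch {α : Type*} (A B : List α) (i j : ℕ) : Prop :=
  1 ≤ i ∧ i ≤ A.length ∧ 1 ≤ j ∧ j ≤ B.length ∧ A[i - 1]? = B[j - 1]?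

/-- `e` is an embedding of the list `s` in the pair of prefixes `(A_i, B_j)`:
a sequence of (1-indexed) position pairs, strictly increasing in both
coordinates, lying in `[1..i] × [1..j]`, such that the `t`-th pair points at
occurrences of the `t`-th character of `s` in both strings. -/
def IsEmbedding {α : Type*} (A B : List α) (i j : ℕ) (s : List α)
    (e : List (ℕ × ℕ)) : Prop :=
  e.Chain' (fun u v => u.1 < v.1 ∧ u.2 < v.2) ∧
  (∀ u ∈ e, 1 ≤ u.1 ∧ u.1 ≤ i ∧ 1 ≤ u.2 ∧ u.2 ≤ j) ∧
  List.Forall₂ (fun (u : ℕ × ℕ) (c : α) =>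
    A[u.1 - 1]? = some c ∧ B[u.2 - 1]? = some c) e s

/-- The match `(i, j)` is antidominant of rank `r` within the rectangle
`[1..I] × [1..J]`. -/
def IsAntidominant {α : Type*} (A B : List α) (r I J i j : ℕ) : Prop :=
  IsMatch A B i j ∧ i ≤ I ∧ j ≤ J ∧ lcsL A B i j = r ∧
  ¬ ∃ i' j', IsMatch A B i' j' ∧ lcsL A B i' j' = r ∧
    ((i' = i ∧ j < j' ∧ j' ≤ J) ∨ (j' = j ∧ i < i' ∧ i' ≤ I))

/-- `e` is an antidominant backtrace for `(i, j)`: a sequence of matches of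
length `L(i,j)`, strictly increasing in both coordinates, such that (setting
the `(k+1)`-st entry to `(i+1, j+1)`) the `t`-th match is antidominant of rank
`t` within the rectangle determined by the `(t+1)`-st entry minus one. -/
def IsAntidominantBacktrace {α : Type*} (A B : List α) (i j : ℕ)
    (e : List (ℕ × ℕ)) : Prop :=
  e.length = lcsL A B i j ∧
  e.Chain' (fun u v => u.1 < v.1 ∧ u.2 < v.2) ∧
  ∀ t < e.length,
    IsAntidominant A B (t + 1)
      (((e ++ [(i + 1, j + 1)]).getD (t + 1) (0, 0)).1 - 1)
      (((e ++ [(i + 1, j + 1)]).getD (t + 1) (0, 0)).2 - 1)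
      (e.getD t (0, 0)).1 (e.getD t (0, 0)).2

section Aux
open List
variable {α : Type*} (A B : List α)

lemma take_sublist_take' {l : List α} {a b : ℕ} (h : a ≤ b) : l.take a <+ l.take b := by
  have h1 := (List.take_prefix a (l.take b)).sublist
  rwa [List.take_take, min_eq_left h] at h1

lemma lcsL_bddAbove (i j : ℕ) :
    BddAbove {k | ∃ s : List α, IsCommonSubseq (A.take i) (B.take j) s ∧ s.length = k} := by
  refine ⟨(A.take i).length, fun k hk => ?_⟩
  obtain ⟨s, hs, rfl⟩ := hk
  exact hs.1.length_le

lemma le_lcsL {i j : ℕ} {s : List α}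
    (h : IsCommonSubseq (A.take i) (B.take j) s) : s.length ≤ lcsL A B i j :=
  le_csSup (lcsL_bddAbove A B i j) ⟨s, h, rfl⟩

lemma exists_lcs (i j : ℕ) :
    ∃ s : List α, IsCommonSubseq (A.take i) (B.take j) s ∧ s.length = lcsL A B i j := by
  have h := Nat.sSup_mem (s := {k | ∃ s : List α, IsCommonSubseq (A.take i) (B.take j) s ∧ s.length = k})
    ⟨0, [], ⟨List.nil_sublist _, List.nil_sublist _⟩, rfl⟩ (lcsL_bddAbove A B i j)
  obtain ⟨s, hs, h⟩ := h
  exact ⟨s, hs, h⟩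

lemma lcsL_mono {i j i' j' : ℕ} (hi : i ≤ i') (hj : j ≤ j') :
    lcsL A B i j ≤ lcsL A B i' j' := by
  obtain ⟨s, ⟨h1, h2⟩, hl⟩ := exists_lcs A B i j
  rw [← hl]
  exact le_lcsL A B ⟨h1.trans (take_sublist_take' hi), h2.trans (take_sublist_take' hj)⟩

lemma dropLast_sublist_of_concat {s l : List α} {x : α} (h : s <+ l ++ [x]) :
    s.dropLast <+ l := by
  rw [List.sublist_append_iff] at h
  obtain ⟨l₁, l₂, rfl, h₁, h₂⟩ := h
  rcases List.sublist_singleton.1 h₂ with rfl | rfl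
  · simpa using (List.dropLast_sublist l₁).trans h₁
  · simpa [List.dropLast_concat] using h₁

lemma exists_split_of_concat_sublist {s l : List α} {c : α} (h : s ++ [c] <+ l) :
    ∃ p, 1 ≤ p ∧ p ≤ l.length ∧ l[p - 1]? = some c ∧
      s <+ l.take (p - 1) ∧ s ++ [c] <+ l.take p := by
  rw [List.append_sublist_iff] at h
  obtain ⟨r₁, r₂, rfl, h₁, h₂⟩ := h
  have hc : c ∈ r₂ := h₂.subset (by simp)
  obtain ⟨r₂a, r₂b, rfl⟩ := List.append_of_mem hc
  refine ⟨(r₁ ++ r₂a).length + 1, by omega, by simp, ?_, ?_, ?_⟩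
  · rw [show r₁ ++ (r₂a ++ c :: r₂b) = (r₁ ++ r₂a) ++ c :: r₂b by simp,
      List.getElem?_append]
    simp
  · have : (r₁ ++ (r₂a ++ c :: r₂b)).take ((r₁ ++ r₂a).length + 1 - 1) = r₁ ++ r₂a := by
      rw [show r₁ ++ (r₂a ++ c :: r₂b) = (r₁ ++ r₂a) ++ c :: r₂b by simp,
        List.take_left' (by simp)]
    rw [this]
    exact h₁.trans (List.sublist_append_left _ _)
  · have : (r₁ ++ (r₂a ++ c :: r₂b)).take ((r₁ ++ r₂a).length + 1) = (r₁ ++ r₂a) ++ [c] := by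
      rw [show r₁ ++ (r₂a ++ c :: r₂b) = (r₁ ++ r₂a ++ [c]) ++ r₂b by simp,
        List.take_left' (by simp; omega)]
    rw [this]
    exact (h₁.trans (List.sublist_append_left _ _)).append (List.Sublist.refl _)

lemma lcsL_match {p q : ℕ} (h : IsMatch A B p q) :
    lcsL A B p q = lcsL A B (p - 1) (q - 1) + 1 := by
  obtain ⟨hp1, hpm, hq1, hqn, hpq⟩ := h
  have hpA : p - 1 < A.length := by omega
  have hqB : q - 1 < B.length := by omega
  set c := A[p - 1]'hpA with hc
  have hcA : A[p - 1]? = some c := List.getElem?_eq_getElem hpA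
  have hcB : B[q - 1]? = some c := by rw [← hpq]; exact hcA
  have htA : A.take p = A.take (p - 1) ++ [c] := by
    conv_lhs => rw [show p = (p - 1) + 1 by omega, List.take_succ, hcA]
    simp
  have htB : B.take q = B.take (q - 1) ++ [c] := by
    conv_lhs => rw [show q = (q - 1) + 1 by omega, List.take_succ, hcB]
    simp
  apply _root_.le_antisymm
  · obtain ⟨s, ⟨h1, h2⟩, hl⟩ := exists_lcs A B p q
    rw [← hl]
    rw [htA] at h1; rw [htB] at h2
    have hd : s.dropLast.length ≤ lcsL A B (p - 1) (q - 1) :=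
      le_lcsL A B ⟨dropLast_sublist_of_concat h1, dropLast_sublist_of_concat h2⟩
    simp [List.length_dropLast] at hd
    omega
  · obtain ⟨s, ⟨h1, h2⟩, hl⟩ := exists_lcs A B (p - 1) (q - 1)
    have : (s ++ [c]).length ≤ lcsL A B p q := by
      apply le_lcsL A B
      constructor
      · rw [htA]; exact h1.append (List.Sublist.refl _)
      · rw [htB]; exact h2.append (List.Sublist.refl _)
    simp at this
    omega

lemma exists_antidominant (r I J : ℕ) : ∀ d p q, IsMatch A B p q → p ≤ I → q ≤ J →
    lcsL A B p q = r → (I - p) + (J - q) ≤ d →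
    ∃ p' q', p ≤ p' ∧ q ≤ q' ∧ A[p' - 1]? = A[p - 1]? ∧ IsAntidominant A B r I J p' q' := by
  intro d
  induction d with
  | zero =>
    intro p q hm hpI hqJ hr hd
    refine ⟨p, q, le_refl _, le_refl _, rfl, hm, hpI, hqJ, hr, ?_⟩
    rintro ⟨i', j', hm', hr', (⟨rfl, hj, hjJ⟩ | ⟨rfl, hi, hiI⟩)⟩ <;> omega
  | succ d ih =>
    intro p q hm hpI hqJ hr hd
    by_cases hv : ∃ i' j', IsMatch A B i' j' ∧ lcsL A B i' j' = r ∧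
      ((i' = p ∧ q < j' ∧ j' ≤ J) ∨ (j' = q ∧ p < i' ∧ i' ≤ I))
    · obtain ⟨i', j', hm', hr', hcase⟩ := hv
      rcases hcase with ⟨he, hj, hjJ⟩ | ⟨he, hi, hiI⟩
      · obtain ⟨p'', q'', h1, h2, h3, h4⟩ := ih i' j' hm' (by omega) hjJ hr' (by omega)
        exact ⟨p'', q'', by omega, by omega, by rw [h3, he], h4⟩
      · obtain ⟨p'', q'', h1, h2, h3, h4⟩ := ih i' j' hm' hiI (by omega) hr' (by omega)
        refine ⟨p'', q'', by omega, by omega, ?_, h4⟩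
        rw [h3, hm'.2.2.2.2, he, ← hm.2.2.2.2]
    · exact ⟨p, q, le_refl _, le_refl _, rfl, hm, hpI, hqJ, hr, hv⟩


end Aux

theorem stmt_15 {α : Type*} [DecidableEq α] (A B : List α) (m n : ℕ)
    (hA : A.length = m) (hB : B.length = n) (i j : ℕ)
    (him : i ≤ m) (hjn : j ≤ n) (s : List α) (hs : IsLCS A B i j s) :
    ∃ e : List (ℕ × ℕ), IsAntidominantBacktrace A B i j e ∧
      e.map (fun u => A[u.1 - 1]?) = s.map some := by
  clear hA hB him hjn
  induction s using List.reverseRecOn generalizing i j with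
  | nil =>
    refine ⟨[], ⟨?_, List.isChain_nil, ?_⟩, rfl⟩
    · simpa using hs.2
    · intro t ht; simp at ht
  | append_singleton s' c ih =>
    obtain ⟨⟨hsa, hsb⟩, hlen⟩ := hs
    simp only [List.length_append, List.length_singleton] at hlen
    set k := s'.length with hk
    -- extract last match position in A
    obtain ⟨p, hp1, hpl, hcA, hs'A, hsA⟩ := exists_split_of_concat_sublist hsa
    obtain ⟨q, hq1, hql, hcB, hs'B, hsB⟩ := exists_split_of_concat_sublist hsb
    rw [List.length_take] at hpl hql
    have hpi : p ≤ i := by omega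
    have hpA : p ≤ A.length := by omega
    have hqj : q ≤ j := by omega
    have hqB : q ≤ B.length := by omega
    rw [List.getElem?_take, if_pos (by omega)] at hcA hcB
    rw [List.take_take, min_eq_left (by omega : p - 1 ≤ i)] at hs'A
    rw [List.take_take, min_eq_left (by omega : q - 1 ≤ j)] at hs'B
    rw [List.take_take, min_eq_left hpi] at hsA
    rw [List.take_take, min_eq_left hqj] at hsB
    have hm : IsMatch A B p q := ⟨hp1, hpA, hq1, hqB, hcA.trans hcB.symm⟩
    have hrank : lcsL A B p q = k + 1 := by
      apply _root_.le_antisymm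
      · calc lcsL A B p q ≤ lcsL A B i j := lcsL_mono A B hpi hqj
          _ = k + 1 := hlen.symm
      · have := le_lcsL A B (i := p) (j := q) ⟨hsA, hsB⟩
        simpa using this
    obtain ⟨P, Q, hpP, hqQ, hchar, had⟩ :=
      exists_antidominant A B (k + 1) i j ((i - p) + (j - q)) p q hm hpi hqj hrank (le_refl _)
    obtain ⟨hmPQ, hPi, hQj, hrPQ, hno⟩ := had
    obtain ⟨hP1, hPA, hQ1, hQB, hPQmatch⟩ := hmPQ
    have hrec : lcsL A B P Q = lcsL A B (P - 1) (Q - 1) + 1 :=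
      lcsL_match A B ⟨hP1, hPA, hQ1, hQB, hPQmatch⟩
    have hsub : lcsL A B (P - 1) (Q - 1) = k := by omega
    have hlcs' : IsLCS A B (P - 1) (Q - 1) s' := by
      refine ⟨⟨hs'A.trans (take_sublist_take' (by omega)),
        hs'B.trans (take_sublist_take' (by omega))⟩, by omega⟩
    obtain ⟨e', ⟨hel, hec, het⟩, hemap⟩ := ih (P - 1) (Q - 1) hlcs'
    rw [hsub] at hel
    have hP1' : P - 1 + 1 = P := by omega
    have hQ1' : Q - 1 + 1 = Q := by omega
    rw [hP1', hQ1'] at het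
    refine ⟨e' ++ [(P, Q)], ⟨?_, ?_, ?_⟩, ?_⟩
    · simp [hel, ← hlen]
    · simp only [List.Chain']; rw [List.isChain_append]
      refine ⟨hec, List.isChain_singleton _, ?_⟩
      intro x hx y hy
      simp at hy
      subst hy
      have hne : e' ≠ [] := by
        intro h; rw [h] at hx; simp at hx
      have hk1 : 0 < e'.length := List.length_pos_iff.mpr hne
      have hx' : x = e'.getD (e'.length - 1) (0, 0) := by
        rw [List.getLast?_eq_getElem?] at hx
        rw [List.getD_eq_getElem?_getD]
        cases h : e'[e'.length - 1]? with
        | none => rw [h] at hx; simp at hx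
        | some y => rw [h] at hx; simp at hx; simp [hx]
      have := het (e'.length - 1) (by omega)
      obtain ⟨-, hle1, hle2, -, -⟩ := this
      have hsent : (e' ++ [(P, Q)]).getD (e'.length - 1 + 1) (0, 0) = (P, Q) := by
        rw [show e'.length - 1 + 1 = e'.length by omega]
        rw [List.getD_eq_getElem?_getD, List.getElem?_append, if_neg (by omega)]
        simp
      rw [hsent] at hle1 hle2
      rw [hx']
      constructor
      · simp only []
        omega
      · simp only []
        omega
    · intro t ht
      simp only [List.length_append, List.length_singleton] at ht
      rcases Nat.lt_or_ge t e'.length with htl | htl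
      · have h1 : (e' ++ [(P, Q)]).getD t (0, 0) = e'.getD t (0, 0) :=
          List.getD_append _ _ _ _ htl
        have h2 : ((e' ++ [(P, Q)]) ++ [(i + 1, j + 1)]).getD (t + 1) (0, 0) =
            (e' ++ [(P, Q)]).getD (t + 1) (0, 0) :=
          List.getD_append _ _ _ _ (by simp; omega)
        rw [h1, h2]
        exact het t htl
      · have htl' : t = e'.length := by omega
        subst htl'
        have h1 : (e' ++ [(P, Q)]).getD e'.length (0, 0) = (P, Q) := by
          rw [List.getD_eq_getElem?_getD, List.getElem?_append, if_neg (by omega)]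
          simp
        have h2 : ((e' ++ [(P, Q)]) ++ [(i + 1, j + 1)]).getD (e'.length + 1) (0, 0) =
            (i + 1, j + 1) := by
          rw [List.getD_eq_getElem?_getD, List.getElem?_append, if_neg (by simp)]
          simp
        rw [h1, h2]
        simp only [Nat.add_sub_cancel]
        rw [hel]
        exact ⟨⟨hP1, hPA, hQ1, hQB, hPQmatch⟩, hPi, hQj, hrPQ, hno⟩
    · simp only [List.map_append, List.map_cons, List.map_nil]
      rw [hemap]
      congr 1
      simp [hchar, hcA]
end

section
/- For every k with 1 ≤ k ≤ L(m,n), there exists a match (i,j) with L(i,j) = k; that is, every rank from 1 up to the LCS length of A and B is realized by at least one match (every contour is nonempty). -/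
/-!
Since `L(i+1, j) ≤ L(i, j) + 1` (and symmetrically in `j`), the values of `L` climb in unit
steps, so there is a first row `i + 1` with `L(i+1, n) = k` and then, in that row, a first
column `j + 1` with `L(i+1, j+1) = k`. At that cell `L` is strictly larger than at both
`(i, j+1)` and `(i+1, j)`, so every longest common subsequence of `A_{i+1}` and `B_{j+1}`
ends in both `a_{i+1}` and `b_{j+1}`: the cell is a match of rank `k`.
-/

section LCS

variable {α : Type*}

lemma bddAbove_commonSubseq_lengths (A B : List α) (i j : ℕ) :
    BddAbove {k | ∃ s : List α, IsCommonSubseq (A.take i) (B.take j) s ∧ s.length = k} :=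
  ⟨(A.take i).length, fun _ ⟨_, hs, hl⟩ => hl ▸ hs.1.length_le⟩

lemma exists_isLCS (A B : List α) (i j : ℕ) : ∃ s, IsLCS A B i j s :=
  Nat.sSup_mem (s := {k | ∃ s : List α, IsCommonSubseq (A.take i) (B.take j) s ∧ s.length = k})
    ⟨0, [], ⟨List.nil_sublist _, List.nil_sublist _⟩, rfl⟩ (bddAbove_commonSubseq_lengths A B i j)

lemma IsCommonSubseq.length_le_lcsL {A B s : List α} {i j : ℕ}
    (h : IsCommonSubseq (A.take i) (B.take j) s) : s.length ≤ lcsL A B i j :=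
  le_csSup (bddAbove_commonSubseq_lengths A B i j) ⟨s, h, rfl⟩

lemma lcsL_comm (A B : List α) (i j : ℕ) : lcsL A B i j = lcsL B A j i := by
  simp only [lcsL, IsCommonSubseq, and_comm]

lemma lcsL_zero_left (A B : List α) (j : ℕ) : lcsL A B 0 j = 0 := by
  obtain ⟨s, ⟨hsA, _⟩, hlen⟩ := exists_isLCS A B 0 j
  rw [← hlen, List.eq_nil_of_sublist_nil (l := s) (by simpa using hsA), List.length_nil]

lemma lcsL_zero_right (A B : List α) (i : ℕ) : lcsL A B i 0 = 0 := by
  rw [lcsL_comm, lcsL_zero_left]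

lemma lcsL_mono_right (A B : List α) (i : ℕ) {j j' : ℕ} (h : j ≤ j') :
    lcsL A B i j ≤ lcsL A B i j' := by
  obtain ⟨s, ⟨hsA, hsB⟩, hlen⟩ := exists_isLCS A B i j
  exact hlen ▸ IsCommonSubseq.length_le_lcsL ⟨hsA, hsB.trans (List.take_sublist_take_left h)⟩

lemma lcsL_succ_left_le (A B : List α) (i j : ℕ) :
    lcsL A B (i + 1) j ≤ lcsL A B i j + 1 := by
  obtain ⟨s, ⟨hsA, hsB⟩, hlen⟩ := exists_isLCS A B (i + 1) j
  rw [List.take_add_one, List.sublist_append_iff] at hsA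
  obtain ⟨l₁, l₂, rfl, h₁, h₂⟩ := hsA
  have hl₂ : l₂.length ≤ 1 := h₂.length_le.trans (by cases A[i]? <;> simp)
  have hl₁ := IsCommonSubseq.length_le_lcsL ⟨h₁, (List.sublist_append_left l₁ l₂).trans hsB⟩
  rw [← hlen, List.length_append]
  omega

lemma lcsL_succ_right_le (A B : List α) (i j : ℕ) :
    lcsL A B i (j + 1) ≤ lcsL A B i j + 1 := by
  rw [lcsL_comm, lcsL_comm A]
  exact lcsL_succ_left_le B A j i

lemma IsLCS.getLast?_eq_of_lcsL_lt {A B s : List α} {i j : ℕ} (hs : IsLCS A B (i + 1) j s)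
    (hlt : lcsL A B i j < lcsL A B (i + 1) j) : s.getLast? = A[i]? := by
  obtain ⟨⟨hsA, hsB⟩, hlen⟩ := hs
  rw [List.take_add_one, List.sublist_append_iff] at hsA
  obtain ⟨l₁, l₂, rfl, h₁, h₂⟩ := hsA
  have hl₂ : l₂ ≠ [] := by
    rintro rfl
    have := IsCommonSubseq.length_le_lcsL ⟨by simpa using h₁, hsB⟩
    omega
  cases hAi : A[i]? with
  | none => simp [hAi] at h₂; exact absurd h₂ hl₂
  | some a =>
    rw [hAi, Option.toList_some, List.sublist_singleton] at h₂
    rw [h₂.resolve_left hl₂, List.getLast?_concat]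

lemma IsLCS.symm {A B s : List α} {i j : ℕ} (hs : IsLCS A B i j s) : IsLCS B A j i s :=
  ⟨hs.1.symm, hs.2.trans (lcsL_comm A B i j)⟩

lemma isMatch_of_lcsL_lt (A B : List α) (i j : ℕ)
    (hup : lcsL A B i (j + 1) < lcsL A B (i + 1) (j + 1))
    (hleft : lcsL A B (i + 1) j < lcsL A B (i + 1) (j + 1)) :
    IsMatch A B (i + 1) (j + 1) := by
  obtain ⟨s, hs⟩ := exists_isLCS A B (i + 1) (j + 1)
  have hA := hs.getLast?_eq_of_lcsL_lt hup
  have hB := hs.symm.getLast?_eq_of_lcsL_lt (by rwa [lcsL_comm, lcsL_comm A B] at hleft)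
  have hs_ne : s ≠ [] := List.ne_nil_of_length_pos (hs.2 ▸ by omega)
  obtain ⟨c, hc⟩ : ∃ c, s.getLast? = some c :=
    Option.isSome_iff_exists.mp (List.getLast?_isSome.mpr hs_ne)
  rw [hc, eq_comm, List.getElem?_eq_some_iff] at hA hB
  obtain ⟨hi, hAc⟩ := hA
  obtain ⟨hj, hBc⟩ := hB
  refine ⟨by omega, hi, by omega, hj, ?_⟩
  simp only [Nat.add_sub_cancel, List.getElem?_eq_getElem hi, List.getElem?_eq_getElem hj, hAc, hBc]

end LCS

lemma exists_lt_apply_add_one_eq (f : ℕ → ℕ) (hstep : ∀ x, f (x + 1) ≤ f x + 1) {k N : ℕ}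
    (h0 : f 0 < k) (hN : k ≤ f N) : ∃ x < N, f x + 1 = k ∧ f (x + 1) = k := by
  induction N with
  | zero => omega
  | succ N ih =>
    by_cases hk : k ≤ f N
    · obtain ⟨x, hx, hfx⟩ := ih hk
      exact ⟨x, by omega, hfx⟩
    · have := hstep N
      exact ⟨N, by omega, by omega, by omega⟩

theorem stmt_17_general {α : Type*} (A B : List α) (m n : ℕ) (k : ℕ)
    (hk1 : 1 ≤ k) (hk2 : k ≤ lcsL A B m n) :
    ∃ i j, IsMatch A B i j ∧ lcsL A B i j = k := by
  obtain ⟨i, -, hi_below, hi⟩ := exists_lt_apply_add_one_eq (lcsL A B · n)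
    (lcsL_succ_left_le A B · n) (by rw [lcsL_zero_left]; omega) hk2
  obtain ⟨j, hjn, hj_below, hj⟩ := exists_lt_apply_add_one_eq (lcsL A B (i + 1))
    (lcsL_succ_right_le A B (i + 1)) (by rw [lcsL_zero_right]; omega) hi.ge
  have hup : lcsL A B i (j + 1) ≤ lcsL A B i n := lcsL_mono_right A B i hjn
  exact ⟨i + 1, j + 1, isMatch_of_lcsL_lt A B i j (by omega) (by omega), hj⟩

theorem stmt_17 {α : Type*} [DecidableEq α] (A B : List α) (m n : ℕ)
    (hA : A.length = m) (hB : B.length = n) (k : ℕ)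
    (hk1 : 1 ≤ k) (hk2 : k ≤ lcsL A B m n) :
    ∃ i j, IsMatch A B i j ∧ lcsL A B i j = k :=
  stmt_17_general A B m n k hk1 hk2
end
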